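/- There exists a constant c > 0 such that for every axis-aligned square σ of side length s and every real t with 0 < t ≤ s, the set of dyadic cells D with t ≤ side(D) ≤ s for which there exists an axis-aligned square ρ with storing cell D and ρ ∩ ∂σ ≠ ∅ (∂σ denotes the boundary of σ), has at most c·(s/t) elements. -/

import Mathlib

open Set

/-- A dyadic cell at level `level` (side length `2^level`) with lower-left corner
`(a·2^level, b·2^level)`. -/
structure DyadicCell where
  level : ℤ
  a : ℤ
  b : ℤ
deriving DecidableEq

/-- The side length of a dyadic cell. -/
noncomputable def DyadicCell.side (C : DyadicCell) : ℝ := 2 ^ C.level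

/-- The dyadic cell as a subset of the plane. -/
noncomputable def DyadicCell.toSet (C : DyadicCell) : Set (ℝ × ℝ) :=
  Set.Icc ((C.a : ℝ) * 2 ^ C.level) ((C.a + 1 : ℝ) * 2 ^ C.level) ×ˢ
    Set.Icc ((C.b : ℝ) * 2 ^ C.level) ((C.b + 1 : ℝ) * 2 ^ C.level)

/-- `5C`: the square obtained by scaling the cell `C` by a factor `5` about its center. -/
noncomputable def DyadicCell.scale5 (C : DyadicCell) : Set (ℝ × ℝ) :=
  Set.Icc ((C.a - 2 : ℝ) * 2 ^ C.level) ((C.a + 3 : ℝ) * 2 ^ C.level) ×ˢ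
    Set.Icc ((C.b - 2 : ℝ) * 2 ^ C.level) ((C.b + 3 : ℝ) * 2 ^ C.level)

/-- An axis-aligned square `[x, x+s] × [y, y+s]` of side length `s > 0`. -/
structure Square where
  x : ℝ
  y : ℝ
  s : ℝ
  s_pos : 0 < s

/-- The square as a subset of the plane. -/
noncomputable def Square.toSet (σ : Square) : Set (ℝ × ℝ) :=
  Set.Icc σ.x (σ.x + σ.s) ×ˢ Set.Icc σ.y (σ.y + σ.s)

/-- The center of a square. -/
noncomputable def Square.center (σ : Square) : ℝ × ℝ := (σ.x + σ.s / 2, σ.y + σ.s / 2)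

/-- `C` is a storing cell of `σ`: a dyadic cell of maximal side length among those that
contain the center of `σ` and are contained in `σ`. -/
def IsStoringCell (σ : Square) (C : DyadicCell) : Prop :=
  σ.center ∈ C.toSet ∧ C.toSet ⊆ σ.toSet ∧
    ∀ D : DyadicCell, σ.center ∈ D.toSet → D.toSet ⊆ σ.toSet → D.side ≤ C.side

lemma two_zpow_pos (ℓ : ℤ) : (0:ℝ) < 2 ^ ℓ := zpow_pos (by norm_num) ℓ

lemma side_le_of_storing {ρ : Square} {D : DyadicCell} (h : IsStoringCell ρ D) :
    D.side ≤ ρ.s := by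
  obtain ⟨-, hsub, -⟩ := h
  have hp := two_zpow_pos D.level
  have h1 : (((D.a:ℝ)) * 2 ^ D.level, ((D.b:ℝ)) * 2 ^ D.level) ∈ D.toSet := by
    simp only [DyadicCell.toSet, Set.mem_prod, Set.mem_Icc]
    refine ⟨⟨le_rfl, ?_⟩, le_rfl, ?_⟩ <;> nlinarith
  have h2 : (((D.a:ℝ) + 1) * 2 ^ D.level, ((D.b:ℝ)) * 2 ^ D.level) ∈ D.toSet := by
    simp only [DyadicCell.toSet, Set.mem_prod, Set.mem_Icc]
    refine ⟨⟨?_, le_rfl⟩, le_rfl, ?_⟩ <;> nlinarith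
  have k1 := (hsub h1).1.1
  have k2 := (hsub h2).1.2
  simp only [Square.toSet, Set.mem_prod, Set.mem_Icc] at k1 k2
  have : ((D.a:ℝ) + 1) * 2 ^ D.level = (D.a:ℝ) * 2 ^ D.level + 2 ^ D.level := by ring
  rw [DyadicCell.side]
  linarith

lemma four_side_gt {ρ : Square} {D : DyadicCell} (h : IsStoringCell ρ D) :
    ρ.s < 4 * D.side := by
  obtain ⟨-, -, hmax⟩ := h
  set ℓ : ℤ := Int.log 2 (ρ.s / 2) with hℓ
  have hs := ρ.s_pos
  have hs2 : (0:ℝ) < ρ.s / 2 := by linarith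
  have h1 : (2:ℝ) ^ ℓ ≤ ρ.s / 2 := by
    have := Int.zpow_log_le_self (b := 2) (r := ρ.s / 2) (by norm_num) hs2
    push_cast at this; exact this
  have h2 : ρ.s / 2 < 2 ^ (ℓ + 1) := by
    have := Int.lt_zpow_succ_log_self (b := 2) (by norm_num) (ρ.s / 2)
    push_cast at this; exact this
  have hp := two_zpow_pos ℓ
  set cx := ρ.x + ρ.s / 2 with hcx
  set cy := ρ.y + ρ.s / 2 with hcy
  set E : DyadicCell := ⟨ℓ, ⌊cx / 2 ^ ℓ⌋, ⌊cy / 2 ^ ℓ⌋⟩ with hE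
  have hfl : ∀ u : ℝ, (⌊u / 2 ^ ℓ⌋ : ℝ) * 2 ^ ℓ ≤ u ∧ u ≤ ((⌊u / 2 ^ ℓ⌋ : ℝ) + 1) * 2 ^ ℓ := by
    intro u
    constructor
    · have := Int.floor_le (u / 2 ^ ℓ)
      calc (⌊u / 2 ^ ℓ⌋ : ℝ) * 2 ^ ℓ ≤ (u / 2 ^ ℓ) * 2 ^ ℓ := by nlinarith
        _ = u := by field_simp
    · have := (Int.lt_floor_add_one (u / 2 ^ ℓ)).le
      calc u = (u / 2 ^ ℓ) * 2 ^ ℓ := by field_simp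
        _ ≤ ((⌊u / 2 ^ ℓ⌋ : ℝ) + 1) * 2 ^ ℓ := by nlinarith
  have hcmem : ρ.center ∈ E.toSet := by
    refine ⟨⟨(hfl cx).1, (hfl cx).2⟩, ⟨(hfl cy).1, (hfl cy).2⟩⟩
  have hEsub : E.toSet ⊆ ρ.toSet := by
    rintro ⟨p, q⟩ ⟨⟨hp1, hp2⟩, hq1, hq2⟩
    have a1 := (hfl cx).1; have a2 := (hfl cx).2
    have b1 := (hfl cy).1; have b2 := (hfl cy).2
    simp only [DyadicCell.toSet, hE] at hp1 hp2 hq1 hq2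
    constructor
    · constructor
      · have : ((⌊cx / 2 ^ ℓ⌋ : ℝ)) * 2 ^ ℓ ≥ cx - 2 ^ ℓ := by nlinarith
        simp only [hcx] at this ⊢
        linarith [hp1, h1]
      · have : ((⌊cx / 2 ^ ℓ⌋ : ℝ) + 1) * 2 ^ ℓ ≤ cx + 2 ^ ℓ := by nlinarith
        simp only [hcx] at this
        have := le_trans hp2 this
        simp only [hcx] at this ⊢
        linarith [h1]
    · constructor
      · have : ((⌊cy / 2 ^ ℓ⌋ : ℝ)) * 2 ^ ℓ ≥ cy - 2 ^ ℓ := by nlinarith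
        simp only [hcy] at this ⊢
        linarith [hq1, h1]
      · have : ((⌊cy / 2 ^ ℓ⌋ : ℝ) + 1) * 2 ^ ℓ ≤ cy + 2 ^ ℓ := by nlinarith
        simp only [hcy] at this
        have := le_trans hq2 this
        simp only [hcy] at this ⊢
        linarith [h1]
  have hfin : (2:ℝ) ^ ℓ ≤ D.side := hmax E hcmem hEsub
  have h2' : (2:ℝ) ^ (ℓ + 1) = 2 * 2 ^ ℓ := by
    rw [zpow_add_one₀ (by norm_num : (2:ℝ) ≠ 0)]; ring
  rw [h2'] at h2
  linarith

lemma subset_scale5 {ρ : Square} {D : DyadicCell} (h : IsStoringCell ρ D) :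
    ρ.toSet ⊆ D.scale5 := by
  have hlt := four_side_gt h
  obtain ⟨hc, -, -⟩ := h
  rw [DyadicCell.side] at hlt
  rintro ⟨p, q⟩ ⟨⟨hp1, hp2⟩, hq1, hq2⟩
  obtain ⟨⟨hcx1, hcx2⟩, hcy1, hcy2⟩ := hc
  simp only [Square.center] at hcx1 hcx2 hcy1 hcy2
  have hp := two_zpow_pos D.level
  refine ⟨⟨?_, ?_⟩, ?_, ?_⟩ <;> nlinarith

lemma mem_frontier_square {σ : Square} {q : ℝ × ℝ} (hq : q ∈ frontier σ.toSet) :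
    q ∈ σ.toSet ∧ ((q.1 = σ.x ∨ q.1 = σ.x + σ.s) ∨ (q.2 = σ.y ∨ q.2 = σ.y + σ.s)) := by
  have hx : σ.x ≤ σ.x + σ.s := by linarith [σ.s_pos]
  have hy : σ.y ≤ σ.y + σ.s := by linarith [σ.s_pos]
  rw [Square.toSet, frontier_prod_eq, closure_Icc, closure_Icc, frontier_Icc hx,
    frontier_Icc hy] at hq
  rcases hq with ⟨h1, h2⟩ | ⟨h1, h2⟩
  · simp only [Set.mem_insert_iff, Set.mem_singleton_iff] at h2
    refine ⟨⟨h1, ?_⟩, Or.inr h2⟩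
    rcases h2 with h2 | h2 <;> rw [h2] <;> exact ⟨by linarith [σ.s_pos], by linarith⟩
  · simp only [Set.mem_insert_iff, Set.mem_singleton_iff] at h1
    refine ⟨⟨?_, h2⟩, Or.inl h1⟩
    rcases h1 with h1 | h1 <;> rw [h1] <;> exact ⟨by linarith [σ.s_pos], by linarith⟩

lemma mem_aux {ℓ a : ℤ} {u v : ℝ} (h1 : ((a:ℝ) - 2) * 2 ^ ℓ ≤ v) (h2 : u ≤ ((a:ℝ) + 3) * 2 ^ ℓ) :
    a ∈ Finset.Icc (⌊u / 2 ^ ℓ⌋ - 3) (⌊v / 2 ^ ℓ⌋ + 2) := by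
  have hw := two_zpow_pos ℓ
  rw [Finset.mem_Icc]
  constructor
  · have hu : u / 2 ^ ℓ ≤ (a:ℝ) + 3 := by rw [div_le_iff₀ hw]; linarith [h2]
    have : (⌊u / 2 ^ ℓ⌋ : ℝ) ≤ (a:ℝ) + 3 := le_trans (Int.floor_le _) hu
    have : ⌊u / 2 ^ ℓ⌋ ≤ a + 3 := by exact_mod_cast this
    omega
  · have hv : ((a:ℝ) - 2) ≤ v / 2 ^ ℓ := by rw [le_div_iff₀ hw]; linarith [h1]
    have : (a - 2 : ℤ) ≤ ⌊v / 2 ^ ℓ⌋ := Int.le_floor.mpr (by push_cast; linarith)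
    omega

lemma card_aux {ℓ : ℤ} {u v : ℝ} (huv : u ≤ v) :
    ((Finset.Icc (⌊u / 2 ^ ℓ⌋ - 3) (⌊v / 2 ^ ℓ⌋ + 2)).card : ℝ) ≤ (v - u) / 2 ^ ℓ + 7 := by
  have hw := two_zpow_pos ℓ
  have hmono : ⌊u / 2 ^ ℓ⌋ ≤ ⌊v / 2 ^ ℓ⌋ := Int.floor_le_floor (by gcongr)
  rw [Int.card_Icc]
  have hz : (0:ℤ) ≤ ⌊v / 2 ^ ℓ⌋ + 2 + 1 - (⌊u / 2 ^ ℓ⌋ - 3) := by omega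
  have hc : (((⌊v / 2 ^ ℓ⌋ + 2 + 1 - (⌊u / 2 ^ ℓ⌋ - 3)).toNat : ℕ) : ℝ)
      = ((⌊v / 2 ^ ℓ⌋ : ℝ) + 2 + 1 - ((⌊u / 2 ^ ℓ⌋ : ℝ) - 3)) := by
    have := Int.toNat_of_nonneg hz
    exact_mod_cast congrArg (Int.cast : ℤ → ℝ) this
  rw [hc]
  have h1 : (⌊v / 2 ^ ℓ⌋ : ℝ) ≤ v / 2 ^ ℓ := Int.floor_le _
  have h2 : u / 2 ^ ℓ - 1 < (⌊u / 2 ^ ℓ⌋ : ℝ) := by linarith [Int.lt_floor_add_one (u / 2 ^ ℓ)]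
  have h3 : (v - u) / 2 ^ ℓ = v / 2 ^ ℓ - u / 2 ^ ℓ := by ring
  linarith

lemma geom_aux (ℓ₀ : ℤ) (n : ℕ) :
    ∑ ℓ ∈ Finset.Icc ℓ₀ (ℓ₀ + n), ((2:ℝ) ^ ℓ)⁻¹ ≤ 2 * ((2:ℝ) ^ ℓ₀)⁻¹ := by
  suffices h : ∑ ℓ ∈ Finset.Icc ℓ₀ (ℓ₀ + n), ((2:ℝ) ^ ℓ)⁻¹ ≤
      2 * ((2:ℝ) ^ ℓ₀)⁻¹ - ((2:ℝ) ^ (ℓ₀ + n))⁻¹ by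
    have := two_zpow_pos (ℓ₀ + n)
    have : (0:ℝ) < ((2:ℝ) ^ (ℓ₀ + (n:ℤ)))⁻¹ := by positivity
    linarith
  induction n with
  | zero => simp; linarith
  | succ n ih =>
    have hins : Finset.Icc ℓ₀ (ℓ₀ + ((n:ℤ) + 1)) =
        insert (ℓ₀ + (n:ℤ) + 1) (Finset.Icc ℓ₀ (ℓ₀ + (n:ℤ))) := by
      ext m; simp only [Finset.mem_Icc, Finset.mem_insert]; omega
    have hcast : ℓ₀ + ((n:ℕ) + 1 : ℕ) = ℓ₀ + ((n:ℤ) + 1) := by push_cast; ring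
    rw [hcast, hins, Finset.sum_insert (by simp only [Finset.mem_Icc]; omega)]
    have hsplit : (2:ℝ) ^ (ℓ₀ + (n:ℤ) + 1) = 2 * 2 ^ (ℓ₀ + (n:ℤ)) := by
      rw [zpow_add_one₀ (by norm_num : (2:ℝ) ≠ 0)]; ring
    have hpos := two_zpow_pos (ℓ₀ + (n:ℤ))
    have h1 : ((2:ℝ) ^ (ℓ₀ + (n:ℤ) + 1))⁻¹ = ((2:ℝ) ^ (ℓ₀ + (n:ℤ)))⁻¹ / 2 := by
      rw [hsplit]; field_simp
    push_cast at ih ⊢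
    rw [show ℓ₀ + ((n:ℤ) + 1) = ℓ₀ + (n:ℤ) + 1 from by ring, h1]
    linarith [ih]

theorem statement5 : ∃ c : ℝ, 0 < c ∧
    ∀ (σ : Square) (t : ℝ), 0 < t → t ≤ σ.s →
      letI A : Set DyadicCell := {D | t ≤ D.side ∧ D.side ≤ σ.s ∧
        ∃ ρ : Square, IsStoringCell ρ D ∧ (ρ.toSet ∩ frontier σ.toSet).Nonempty}
      A.Finite ∧ (A.ncard : ℝ) ≤ c * (σ.s / t) := by
  refine ⟨448, by norm_num, ?_⟩
  intro σ t ht hts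
  set s := σ.s with hs
  have hspos : (0:ℝ) < s := σ.s_pos
  set ℓ₀ := Int.clog 2 t with hℓ₀
  set ℓ₁ := Int.log 2 s with hℓ₁
  have h2t : t ≤ 2 ^ ℓ₀ := by
    have := Int.self_le_zpow_clog (b := 2) (r := t) (by norm_num)
    push_cast at this; exact this
  have h2s : (2:ℝ) ^ ℓ₁ ≤ s := by
    have := Int.zpow_log_le_self (b := 2) (r := s) (by norm_num) hspos
    push_cast at this; exact this
  -- finsets
  set Sx : ℤ → Finset ℤ := fun ℓ =>
    Finset.Icc (⌊σ.x / 2 ^ ℓ⌋ - 3) (⌊σ.x / 2 ^ ℓ⌋ + 2) ∪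
    Finset.Icc (⌊(σ.x + s) / 2 ^ ℓ⌋ - 3) (⌊(σ.x + s) / 2 ^ ℓ⌋ + 2) with hSx
  set Sy : ℤ → Finset ℤ := fun ℓ =>
    Finset.Icc (⌊σ.y / 2 ^ ℓ⌋ - 3) (⌊σ.y / 2 ^ ℓ⌋ + 2) ∪
    Finset.Icc (⌊(σ.y + s) / 2 ^ ℓ⌋ - 3) (⌊(σ.y + s) / 2 ^ ℓ⌋ + 2) with hSy
  set Lx : ℤ → Finset ℤ := fun ℓ =>
    Finset.Icc (⌊σ.x / 2 ^ ℓ⌋ - 3) (⌊(σ.x + s) / 2 ^ ℓ⌋ + 2) with hLx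
  set Ly : ℤ → Finset ℤ := fun ℓ =>
    Finset.Icc (⌊σ.y / 2 ^ ℓ⌋ - 3) (⌊(σ.y + s) / 2 ^ ℓ⌋ + 2) with hLy
  set T : ℤ → Finset (ℤ × ℤ) := fun ℓ => (Sx ℓ ×ˢ Ly ℓ) ∪ (Lx ℓ ×ˢ Sy ℓ) with hT
  set F : Finset DyadicCell :=
    (Finset.Icc ℓ₀ ℓ₁).biUnion (fun ℓ => (T ℓ).image (fun p => ⟨ℓ, p.1, p.2⟩)) with hF
  have hsub : {D : DyadicCell | t ≤ D.side ∧ D.side ≤ s ∧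
      ∃ ρ : Square, IsStoringCell ρ D ∧ (ρ.toSet ∩ frontier σ.toSet).Nonempty} ⊆ ↑F := by
    rintro D ⟨hDt, hDs, ρ, hst, q, hq1, hq2⟩
    rw [DyadicCell.side] at hDt hDs
    have hlev1 : ℓ₀ ≤ D.level := by
      have h := Int.clog_mono_right (b := 2) ht
        (show t ≤ ((2:ℕ):ℝ) ^ D.level by push_cast; exact hDt)
      rwa [Int.clog_zpow (by norm_num : 1 < 2)] at h
    have hlev2 : D.level ≤ ℓ₁ := by
      have h := Int.log_mono_right (b := 2)
        (show (0:ℝ) < ((2:ℕ):ℝ) ^ D.level by push_cast; exact two_zpow_pos _)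
        (show ((2:ℕ):ℝ) ^ D.level ≤ s by push_cast; exact hDs)
      rwa [Int.log_zpow (by norm_num : 1 < 2)] at h
    have hq5 := subset_scale5 hst hq1
    obtain ⟨⟨ha1, ha2⟩, hb1, hb2⟩ := hq5
    obtain ⟨⟨⟨hqx1, hqx2⟩, hqy1, hqy2⟩, hedge⟩ := mem_frontier_square hq2
    have hTmem : (D.a, D.b) ∈ T D.level := by
      rcases hedge with (he | he) | (he | he)
      · exact Finset.mem_union_left _ (Finset.mem_product.mpr
          ⟨Finset.mem_union_left _ (mem_aux (he ▸ ha1) (he ▸ ha2)),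
           mem_aux (le_trans hb1 hqy2) (le_trans hqy1 hb2)⟩)
      · exact Finset.mem_union_left _ (Finset.mem_product.mpr
          ⟨Finset.mem_union_right _ (mem_aux (he ▸ ha1) (he ▸ ha2)),
           mem_aux (le_trans hb1 hqy2) (le_trans hqy1 hb2)⟩)
      · exact Finset.mem_union_right _ (Finset.mem_product.mpr
          ⟨mem_aux (le_trans ha1 hqx2) (le_trans hqx1 ha2),
           Finset.mem_union_left _ (mem_aux (he ▸ hb1) (he ▸ hb2))⟩)
      · exact Finset.mem_union_right _ (Finset.mem_product.mpr
          ⟨mem_aux (le_trans ha1 hqx2) (le_trans hqx1 ha2),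
           Finset.mem_union_right _ (mem_aux (he ▸ hb1) (he ▸ hb2))⟩)
    refine Finset.mem_coe.mpr (Finset.mem_biUnion.mpr ⟨D.level, ?_, ?_⟩)
    · rw [Finset.mem_Icc]; exact ⟨hlev1, hlev2⟩
    · exact Finset.mem_image.mpr ⟨(D.a, D.b), hTmem, rfl⟩
  refine ⟨Set.Finite.subset F.finite_toSet hsub, ?_⟩
  have hcard1 : ({D : DyadicCell | t ≤ D.side ∧ D.side ≤ s ∧
      ∃ ρ : Square, IsStoringCell ρ D ∧ (ρ.toSet ∩ frontier σ.toSet).Nonempty}).ncard ≤ F.card := by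
    rw [← Set.ncard_coe_finset F]
    exact Set.ncard_le_ncard hsub F.finite_toSet
  -- bound card of F
  have hTcard : ∀ ℓ ∈ Finset.Icc ℓ₀ ℓ₁, ((T ℓ).card : ℝ) ≤ 224 * s * ((2:ℝ) ^ ℓ)⁻¹ := by
    intro ℓ hℓ
    rw [Finset.mem_Icc] at hℓ
    have hw := two_zpow_pos ℓ
    have hws : (2:ℝ) ^ ℓ ≤ s := by
      calc (2:ℝ) ^ ℓ ≤ 2 ^ ℓ₁ := by
            apply zpow_le_zpow_right₀ (by norm_num) hℓ.2
        _ ≤ s := h2s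
    have hsdiv : (1:ℝ) ≤ s * ((2:ℝ) ^ ℓ)⁻¹ := by
      rw [← div_eq_mul_inv, le_div_iff₀ hw]; linarith
    have hsmall : ∀ u : ℝ, ((Finset.Icc (⌊u / 2 ^ ℓ⌋ - 3) (⌊u / 2 ^ ℓ⌋ + 2)).card : ℝ) ≤ 7 := by
      intro u
      have := card_aux (ℓ := ℓ) (u := u) (v := u) le_rfl
      simpa using this
    have hSxcard : ((Sx ℓ).card : ℝ) ≤ 14 := by
      calc ((Sx ℓ).card : ℝ) ≤ ((Finset.Icc (⌊σ.x / 2 ^ ℓ⌋ - 3) (⌊σ.x / 2 ^ ℓ⌋ + 2)).card : ℝ)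
            + ((Finset.Icc (⌊(σ.x + s) / 2 ^ ℓ⌋ - 3) (⌊(σ.x + s) / 2 ^ ℓ⌋ + 2)).card : ℝ) := by
            exact_mod_cast Finset.card_union_le _ _
        _ ≤ 14 := by linarith [hsmall σ.x, hsmall (σ.x + s)]
    have hSycard : ((Sy ℓ).card : ℝ) ≤ 14 := by
      calc ((Sy ℓ).card : ℝ) ≤ ((Finset.Icc (⌊σ.y / 2 ^ ℓ⌋ - 3) (⌊σ.y / 2 ^ ℓ⌋ + 2)).card : ℝ)
            + ((Finset.Icc (⌊(σ.y + s) / 2 ^ ℓ⌋ - 3) (⌊(σ.y + s) / 2 ^ ℓ⌋ + 2)).card : ℝ) := by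
            exact_mod_cast Finset.card_union_le _ _
        _ ≤ 14 := by linarith [hsmall σ.y, hsmall (σ.y + s)]
    have hLxcard : ((Lx ℓ).card : ℝ) ≤ 8 * (s * ((2:ℝ) ^ ℓ)⁻¹) := by
      have := card_aux (ℓ := ℓ) (u := σ.x) (v := σ.x + s) (by linarith)
      have heq : (σ.x + s - σ.x) / 2 ^ ℓ = s * ((2:ℝ) ^ ℓ)⁻¹ := by ring
      rw [heq] at this
      linarith
    have hLycard : ((Ly ℓ).card : ℝ) ≤ 8 * (s * ((2:ℝ) ^ ℓ)⁻¹) := by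
      have := card_aux (ℓ := ℓ) (u := σ.y) (v := σ.y + s) (by linarith)
      have heq : (σ.y + s - σ.y) / 2 ^ ℓ = s * ((2:ℝ) ^ ℓ)⁻¹ := by ring
      rw [heq] at this
      linarith
    calc ((T ℓ).card : ℝ) ≤ ((Sx ℓ ×ˢ Ly ℓ).card : ℝ) + ((Lx ℓ ×ˢ Sy ℓ).card : ℝ) := by
          exact_mod_cast Finset.card_union_le _ _
      _ = ((Sx ℓ).card : ℝ) * ((Ly ℓ).card : ℝ) + ((Lx ℓ).card : ℝ) * ((Sy ℓ).card : ℝ) := by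
          rw [Finset.card_product, Finset.card_product]; push_cast; ring
      _ ≤ 14 * (8 * (s * ((2:ℝ) ^ ℓ)⁻¹)) + (8 * (s * ((2:ℝ) ^ ℓ)⁻¹)) * 14 := by
          have c1 : (0:ℝ) ≤ ((Ly ℓ).card : ℝ) := Nat.cast_nonneg _
          have c2 : (0:ℝ) ≤ ((Lx ℓ).card : ℝ) := Nat.cast_nonneg _
          have c3 : (0:ℝ) ≤ ((Sx ℓ).card : ℝ) := Nat.cast_nonneg _
          have c4 : (0:ℝ) ≤ ((Sy ℓ).card : ℝ) := Nat.cast_nonneg _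
          nlinarith
      _ = 224 * s * ((2:ℝ) ^ ℓ)⁻¹ := by ring
  have hgeom : ∑ ℓ ∈ Finset.Icc ℓ₀ ℓ₁, ((2:ℝ) ^ ℓ)⁻¹ ≤ 2 * ((2:ℝ) ^ ℓ₀)⁻¹ := by
    rcases le_or_gt ℓ₀ ℓ₁ with h | h
    · have : ℓ₁ = ℓ₀ + ((ℓ₁ - ℓ₀).toNat : ℤ) := by omega
      rw [this]
      exact geom_aux ℓ₀ _
    · rw [Finset.Icc_eq_empty (by omega)]
      simp
      positivity
  have hFcard : (F.card : ℝ) ≤ 448 * (s / t) := by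
    calc (F.card : ℝ) ≤ ∑ ℓ ∈ Finset.Icc ℓ₀ ℓ₁, (((T ℓ).image
          (fun p : ℤ × ℤ => (⟨ℓ, p.1, p.2⟩ : DyadicCell))).card : ℝ) := by
          exact_mod_cast Finset.card_biUnion_le
      _ ≤ ∑ ℓ ∈ Finset.Icc ℓ₀ ℓ₁, ((T ℓ).card : ℝ) := by
          apply Finset.sum_le_sum
          intro ℓ _
          exact_mod_cast Finset.card_image_le
      _ ≤ ∑ ℓ ∈ Finset.Icc ℓ₀ ℓ₁, 224 * s * ((2:ℝ) ^ ℓ)⁻¹ := Finset.sum_le_sum hTcard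
      _ = 224 * s * ∑ ℓ ∈ Finset.Icc ℓ₀ ℓ₁, ((2:ℝ) ^ ℓ)⁻¹ := by rw [Finset.mul_sum]
      _ ≤ 224 * s * (2 * ((2:ℝ) ^ ℓ₀)⁻¹) := by
          apply mul_le_mul_of_nonneg_left hgeom (by positivity)
      _ ≤ 448 * (s / t) := by
          have hinv : ((2:ℝ) ^ ℓ₀)⁻¹ ≤ t⁻¹ := by
            apply inv_anti₀ ht h2t
          have : s * ((2:ℝ) ^ ℓ₀)⁻¹ ≤ s * t⁻¹ :=
            mul_le_mul_of_nonneg_left hinv (le_of_lt hspos)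
          rw [div_eq_mul_inv]
          linarith
  calc (({D : DyadicCell | t ≤ D.side ∧ D.side ≤ s ∧
      ∃ ρ : Square, IsStoringCell ρ D ∧ (ρ.toSet ∩ frontier σ.toSet).Nonempty}).ncard : ℝ)
      ≤ (F.card : ℝ) := by exact_mod_cast hcard1
    _ ≤ 448 * (s / t) := hFcard
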